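/- Let n, p be positive reals with n/p > Z and define j = log₂(2n/(pZ)). Then Q(n,p,Z) := (n/p)²/Z + ∑_{i=2}^{j} 2^{i-1}·p·(n/(2^{i-1}p))²/Z + ∑_{i=j+1}^{log₂ n} 2^{i-1}·p·(n/(2^{i-1}p)) ≤ C·(n²/(pZ) + n·log₂(pZ)) for an absolute constant C, where the sums range over integers i in the given intervals. -/

import Mathlib

/-!
Labels `i ≤ j` cost `n²/(pZ) · 2^{-(i-1)}` each, a geometric series dominated by `n²/(pZ)`.
Labels `i > j` cost exactly `n` each, and since `j = 1 + log₂ n - log₂ (pZ)` at most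
`log₂ (pZ)` of them lie below `log₂ n`.
-/

open Finset

lemma sum_half_pow_le_two (s : Finset ℕ) : ∑ i ∈ s, (1 / 2 : ℝ) ^ i ≤ 2 :=
  (summable_geometric_two.sum_le_tsum s fun _ _ => by positivity).trans tsum_geometric_two.le

lemma sum_Icc_two_half_pow_pred_le_two (j : ℕ) : ∑ i ∈ Icc 2 j, (1 / 2 : ℝ) ^ (i - 1) ≤ 2 := by
  rw [← sum_image (g := (· - 1)) fun a ha b hb hab => by
    simp only [coe_Icc, Set.mem_Icc] at ha hb hab; omega]
  exact sum_half_pow_le_two _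

lemma card_Icc_succ_floor_le {x y : ℝ} {j : ℕ} (hy : 0 ≤ y) (hxy : x ≤ j + y) :
    ((Icc (j + 1) ⌊x⌋₊).card : ℝ) ≤ y := by
  have hfloor : ⌊x⌋₊ ≤ ⌊y⌋₊ + j := by
    rw [← Nat.floor_add_natCast hy, add_comm y]
    exact Nat.floor_le_floor hxy
  have hcard : (Icc (j + 1) ⌊x⌋₊).card ≤ ⌊y⌋₊ := by
    rw [Nat.card_Icc]
    omega
  exact (Nat.cast_le.mpr hcard).trans (Nat.floor_le hy)

lemma cache_level_cost_eq {p : ℝ} (hp : p ≠ 0) (n Z : ℝ) (k : ℕ) :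
    2 ^ k * p * (n / (2 ^ k * p)) ^ 2 / Z = n ^ 2 / (p * Z) * (1 / 2) ^ k := by
  rw [one_div, inv_pow]
  field_simp

lemma linear_level_cost_eq {p : ℝ} (hp : p ≠ 0) (n : ℝ) (k : ℕ) :
    2 ^ k * p * (n / (2 ^ k * p)) = n :=
  mul_div_cancel₀ n (by positivity)

lemma sum_cache_levels_le {p : ℝ} (hp : 0 < p) {n Z : ℝ} (hZ : 0 ≤ Z) (j : ℕ) :
    ∑ i ∈ Icc 2 j, 2 ^ (i - 1) * p * (n / (2 ^ (i - 1) * p)) ^ 2 / Z ≤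
      2 * (n ^ 2 / (p * Z)) := by
  simp only [cache_level_cost_eq hp.ne', ← mul_sum]
  rw [mul_comm 2]
  exact mul_le_mul_of_nonneg_left (sum_Icc_two_half_pow_pred_le_two j)
    (div_nonneg (sq_nonneg n) (mul_nonneg hp.le hZ))

theorem stmt_11 :
    ∃ C : ℝ, 0 < C ∧
      ∀ (n p Z : ℝ) (j : ℕ), 1 ≤ p → 2 ≤ Z → Z < n / p →
        (j : ℝ) = Real.logb 2 (2 * n / (p * Z)) → 2 ≤ j →
        (n / p) ^ 2 / Z +
            (∑ i ∈ Finset.Icc 2 j,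
              2 ^ (i - 1) * p * (n / (2 ^ (i - 1) * p)) ^ 2 / Z) +
            (∑ i ∈ Finset.Icc (j + 1) ⌊Real.logb 2 n⌋₊,
              2 ^ (i - 1) * p * (n / (2 ^ (i - 1) * p))) ≤
          C * (n ^ 2 / (p * Z) + n * Real.logb 2 (p * Z)) := by
  refine ⟨3, by norm_num, fun n p Z j hp hZ hZnp hj _ => ?_⟩
  have hp0 : 0 < p := by linarith
  have hn : 0 < n := (div_pos_iff_of_pos_right hp0).mp (by linarith)
  have hpZ : 1 ≤ p * Z := by nlinarith
  have hlog : 0 ≤ Real.logb 2 (p * Z) := Real.logb_nonneg (by norm_num) hpZ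
  have hj' : (j : ℝ) = 1 + Real.logb 2 n - Real.logb 2 (p * Z) := by
    rw [hj, Real.logb_div (by positivity) (by positivity), Real.logb_mul (by norm_num) hn.ne',
      Real.logb_self_eq_one one_lt_two]
  have htop : (n / p) ^ 2 / Z ≤ n ^ 2 / (p * Z) := by
    rw [show (n / p) ^ 2 / Z = n ^ 2 / (p * Z) / p by field_simp]
    exact div_le_self (by positivity) hp
  have hcache := sum_cache_levels_le hp0 (n := n) (by linarith : 0 ≤ Z) j
  have hlinear : ∑ i ∈ Icc (j + 1) ⌊Real.logb 2 n⌋₊, 2 ^ (i - 1) * p * (n / (2 ^ (i - 1) * p)) ≤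
      n * Real.logb 2 (p * Z) := by
    simp only [linear_level_cost_eq hp0.ne', sum_const, nsmul_eq_mul]
    rw [mul_comm n]
    exact mul_le_mul_of_nonneg_right (card_Icc_succ_floor_le hlog (by linarith)) hn.le
  have hlinear_nonneg : 0 ≤ n * Real.logb 2 (p * Z) := by positivity
  linarith
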